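/- Majorisation theorem for Riemann–Stieltjes Δ-integrals: if y and x−y are both non-decreasing (or both non-increasing) on [a,b]_T, ∫_a^b p·y Δg = ∫_a^b p·x Δg, and F is continuous convex, then ∫_a^b p(t)F(y(t)) Δg(t) ≤ ∫_a^b p(t)F(x(t)) Δg(t). -/

import Mathlib

open Set

/-- A partition `a = t 0 < t 1 < ... < t n = b` of `[a,b] ∩ T`. -/
structure TSPartition (T : Set ℝ) (a b : ℝ) where
  n : ℕ
  t : Fin (n + 1) → ℝ
  strictMono : StrictMono t
  mem : ∀ i, t i ∈ T
  first : t 0 = a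
  last : t (Fin.last n) = b

/-- The set of points of a partition. -/
def TSPartition.points {T : Set ℝ} {a b : ℝ} (P : TSPartition T a b) : Set ℝ :=
  Set.range P.t

/-- A selection of points for a partition: `x i ∈ [t i, t (i+1)) ∩ T`. -/
def IsSelection {T : Set ℝ} {a b : ℝ} (P : TSPartition T a b) (X : Fin P.n → ℝ) : Prop :=
  ∀ i : Fin P.n, X i ∈ T ∧ P.t i.castSucc ≤ X i ∧ X i < P.t i.succ

/-- The Riemann–Stieltjes Δ-sum `Σ f(x i)(g(t (i+1)) − g(t i))`. -/
def RSsum {T : Set ℝ} {a b : ℝ} (f g : ℝ → ℝ) (P : TSPartition T a b)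
    (X : Fin P.n → ℝ) : ℝ :=
  ∑ i : Fin P.n, f (X i) * (g (P.t i.succ) - g (P.t i.castSucc))

/-- `f` is Riemann–Stieltjes Δ-integrable w.r.t. `g` on `[a,b] ∩ T` with value `I`. -/
def IsRSIntegral (T : Set ℝ) (a b : ℝ) (f g : ℝ → ℝ) (I : ℝ) : Prop :=
  ∀ ε > 0, ∃ P₀ : TSPartition T a b, ∀ P : TSPartition T a b,
    P₀.points ⊆ P.points → ∀ X : Fin P.n → ℝ, IsSelection P X →
      |RSsum f g P X - I| < ε

/-- Forward jump operator `σ` of a time scale. -/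
noncomputable def tsSigma (T : Set ℝ) (t : ℝ) : ℝ := sInf {s | s ∈ T ∧ t < s}

/-- Backward jump operator `ρ` of a time scale. -/
noncomputable def tsRho (T : Set ℝ) (t : ℝ) : ℝ := sSup {s | s ∈ T ∧ s < t}

/-- `f` is rd-continuous on `[a,b] ∩ T`: continuous (within the time scale) at
right-dense points, and possessing finite left-sided limits at left-dense points. -/
def RdContinuousOn (T : Set ℝ) (a b : ℝ) (f : ℝ → ℝ) : Prop :=
  (∀ t ∈ Set.Icc a b ∩ T, tsSigma T t = t →
      ContinuousWithinAt f (Set.Icc a b ∩ T) t) ∧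
  (∀ t ∈ Set.Icc a b ∩ T, tsRho T t = t →
      ∃ L, Filter.Tendsto f (nhdsWithin t ((Set.Icc a b ∩ T) ∩ Set.Iio t)) (nhds L))

/-- Double Riemann–Stieltjes Δ-sum. -/
def RSsum2 {T₁ T₂ : Set ℝ} {a b c d : ℝ} (f : ℝ → ℝ → ℝ) (g₁ g₂ : ℝ → ℝ)
    (P : TSPartition T₁ a b) (Q : TSPartition T₂ c d)
    (X : Fin P.n → ℝ) (Y : Fin Q.n → ℝ) : ℝ :=
  ∑ i : Fin P.n, ∑ j : Fin Q.n,
    f (X i) (Y j) * (g₁ (P.t i.succ) - g₁ (P.t i.castSucc)) *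
      (g₂ (Q.t j.succ) - g₂ (Q.t j.castSucc))

/-- `f` is double Riemann–Stieltjes Δ-integrable w.r.t. `g₁, g₂` on
`([a,b) ∩ T₁) × ([c,d) ∩ T₂)` with value `I`. -/
def IsRSIntegral2 (T₁ T₂ : Set ℝ) (a b c d : ℝ) (f : ℝ → ℝ → ℝ)
    (g₁ g₂ : ℝ → ℝ) (I : ℝ) : Prop :=
  ∀ ε > 0, ∃ (P₀ : TSPartition T₁ a b) (Q₀ : TSPartition T₂ c d),
    ∀ (P : TSPartition T₁ a b) (Q : TSPartition T₂ c d),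
      P₀.points ⊆ P.points → Q₀.points ⊆ Q.points →
      ∀ (X : Fin P.n → ℝ) (Y : Fin Q.n → ℝ),
        IsSelection P X → IsSelection Q Y →
          |RSsum2 f g₁ g₂ P Q X Y - I| < ε

/-- Lower Darboux–Stieltjes sum. -/
noncomputable def lowerDS {T : Set ℝ} {a b : ℝ} (f g : ℝ → ℝ)
    (P : TSPartition T a b) : ℝ :=
  ∑ i : Fin P.n,
    sInf (f '' (Set.Ico (P.t i.castSucc) (P.t i.succ) ∩ T)) *
      (g (P.t i.succ) - g (P.t i.castSucc))

/-- Upper Darboux–Stieltjes sum. -/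
noncomputable def upperDS {T : Set ℝ} {a b : ℝ} (f g : ℝ → ℝ)
    (P : TSPartition T a b) : ℝ :=
  ∑ i : Fin P.n,
    sSup (f '' (Set.Ico (P.t i.castSucc) (P.t i.succ) ∩ T)) *
      (g (P.t i.succ) - g (P.t i.castSucc))

/-!
Since `y` and `x - y` are similarly monotone, `y` is smaller wherever `x < y` than wherever
`y < x`; so every chord of `F` between `x t` and `y t` of the first kind lies to the left of every
chord of the second kind, and by the three-chord lemma has the smaller slope. A slope `k` between
the two families gives `F (x t) - F (y t) ≥ k * (x t - y t)` for all `t`; multiplying by `p ≥ 0`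
and integrating, the right-hand side integrates to `k * (∫ p x - ∫ p y) = 0`. Because the chord
slopes may be unbounded near the ends of the range of `x` and `y`, `k` is only found up to an
additive error `η`, using that `F` is uniformly continuous on that compact range.
-/

lemma Fin.sum_succ_sub_castSucc {M : Type*} [AddCommGroup M] :
    ∀ {n : ℕ} (f : Fin (n + 1) → M),
      ∑ i : Fin n, (f i.succ - f i.castSucc) = f (Fin.last n) - f 0
  | 0, f => by simp
  | n + 1, f => by
    rw [Fin.sum_univ_castSucc]
    simp only [Fin.succ_castSucc]
    rw [Fin.sum_succ_sub_castSucc fun i => f i.castSucc, Fin.succ_last, Fin.castSucc_zero]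
    abel

namespace TSPartition

variable {T : Set ℝ} {a b : ℝ}

lemma t_mem_Icc (P : TSPartition T a b) (j : Fin (P.n + 1)) : P.t j ∈ Icc a b :=
  ⟨by simpa only [P.first] using P.strictMono.monotone (Fin.zero_le j),
    by simpa only [P.last] using P.strictMono.monotone (Fin.le_last j)⟩

lemma t_mem (P : TSPartition T a b) (j : Fin (P.n + 1)) : P.t j ∈ Icc a b ∩ T :=
  ⟨P.t_mem_Icc j, P.mem j⟩

lemma exists_points_eq (S : Finset ℝ) (hST : ↑S ⊆ T) (ha : a ∈ S) (hb : b ∈ S)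
    (hS : ↑S ⊆ Icc a b) : ∃ P : TSPartition T a b, P.points = S := by
  obtain ⟨n, hn⟩ := Nat.exists_eq_add_one_of_ne_zero (Finset.card_pos.2 ⟨a, ha⟩).ne'
  let e := S.orderEmbOfFin hn
  refine ⟨⟨n, e, e.strictMono, fun i => hST (S.orderEmbOfFin_mem hn i), ?_, ?_⟩,
    S.range_orderEmbOfFin hn⟩
  · refine (S.orderEmbOfFin_zero hn n.succ_pos).trans ?_
    exact le_antisymm (S.min'_le a ha) (S.le_min' _ _ fun t ht => (hS ht).1)
  · refine (S.orderEmbOfFin_last hn n.succ_pos).trans ?_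
    exact le_antisymm (S.max'_le _ _ fun t ht => (hS ht).2) (S.le_max' b hb)

lemma exists_points_superset (P₁ P₂ : TSPartition T a b) :
    ∃ P : TSPartition T a b, P₁.points ⊆ P.points ∧ P₂.points ⊆ P.points := by
  classical
  let S := Finset.univ.image P₁.t ∪ Finset.univ.image P₂.t
  have hS : (S : Set ℝ) = P₁.points ∪ P₂.points := by simp [S, points]
  obtain ⟨P, hP⟩ := exists_points_eq (T := T) S
    (hS ▸ union_subset (range_subset_iff.2 P₁.mem) (range_subset_iff.2 P₂.mem))
    (Finset.mem_union_left _ (Finset.mem_image.2 ⟨0, Finset.mem_univ _, P₁.first⟩))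
    (Finset.mem_union_left _ (Finset.mem_image.2 ⟨Fin.last _, Finset.mem_univ _, P₁.last⟩))
    (hS ▸ union_subset (range_subset_iff.2 P₁.t_mem_Icc) (range_subset_iff.2 P₂.t_mem_Icc))
  exact ⟨P, hP ▸ hS ▸ subset_union_left, hP ▸ hS ▸ subset_union_right⟩

lemma isSelection_castSucc (P : TSPartition T a b) : IsSelection P fun i => P.t i.castSucc :=
  fun i => ⟨P.mem _, le_rfl, P.strictMono i.castSucc_lt_succ⟩

lemma sum_sub (P : TSPartition T a b) (g : ℝ → ℝ) :
    ∑ i : Fin P.n, (g (P.t i.succ) - g (P.t i.castSucc)) = g b - g a := by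
  rw [Fin.sum_succ_sub_castSucc fun j => g (P.t j), P.last, P.first]

end TSPartition

namespace IsRSIntegral

variable {T : Set ℝ} {a b : ℝ} {f h g : ℝ → ℝ} {I J : ℝ}

lemma add (hf : IsRSIntegral T a b f g I) (hh : IsRSIntegral T a b h g J) :
    IsRSIntegral T a b (fun t => f t + h t) g (I + J) := by
  intro ε hε
  obtain ⟨P₁, hP₁⟩ := hf (ε / 2) (half_pos hε)
  obtain ⟨P₂, hP₂⟩ := hh (ε / 2) (half_pos hε)
  obtain ⟨P₀, h₁, h₂⟩ := P₁.exists_points_superset P₂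
  refine ⟨P₀, fun P hP X hX => ?_⟩
  have hsum : RSsum (fun t => f t + h t) g P X = RSsum f g P X + RSsum h g P X := by
    simp only [RSsum, add_mul, Finset.sum_add_distrib]
  calc |RSsum (fun t => f t + h t) g P X - (I + J)|
      = |(RSsum f g P X - I) + (RSsum h g P X - J)| := by rw [hsum, add_sub_add_comm]
    _ ≤ |RSsum f g P X - I| + |RSsum h g P X - J| := abs_add_le _ _
    _ < ε / 2 + ε / 2 := add_lt_add (hP₁ P (h₁.trans hP) X hX) (hP₂ P (h₂.trans hP) X hX)
    _ = ε := add_halves ε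

lemma const_mul (hf : IsRSIntegral T a b f g I) (c : ℝ) :
    IsRSIntegral T a b (fun t => c * f t) g (c * I) := by
  intro ε hε
  have hc : 0 < |c| + 1 := by positivity
  obtain ⟨P₀, hP₀⟩ := hf (ε / (|c| + 1)) (div_pos hε hc)
  refine ⟨P₀, fun P hP X hX => ?_⟩
  have hsum : RSsum (fun t => c * f t) g P X = c * RSsum f g P X := by
    simp only [RSsum, Finset.mul_sum, mul_assoc]
  calc |RSsum (fun t => c * f t) g P X - c * I| = |c| * |RSsum f g P X - I| := by
        rw [hsum, ← mul_sub, abs_mul]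
    _ ≤ (|c| + 1) * |RSsum f g P X - I| := by gcongr; linarith
    _ < (|c| + 1) * (ε / (|c| + 1)) := by gcongr; exact hP₀ P hP X hX
    _ = ε := mul_div_cancel₀ ε hc.ne'

lemma sub (hf : IsRSIntegral T a b f g I) (hh : IsRSIntegral T a b h g J) :
    IsRSIntegral T a b (fun t => f t - h t) g (I - J) := by
  simpa only [neg_one_mul, ← sub_eq_add_neg] using hf.add (hh.const_mul (-1))

lemma mul_sub_le_of_le (hf : IsRSIntegral T a b f g I) (hg : MonotoneOn g (Icc a b ∩ T))
    {c : ℝ} (hc : ∀ t ∈ Icc a b ∩ T, c ≤ f t) : c * (g b - g a) ≤ I := by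
  refine le_of_forall_pos_le_add fun ε hε => ?_
  obtain ⟨P, hP⟩ := hf ε hε
  have hsum : c * (g b - g a) ≤ RSsum f g P fun i => P.t i.castSucc := by
    rw [← P.sum_sub g, Finset.mul_sum]
    exact Finset.sum_le_sum fun i _ => mul_le_mul_of_nonneg_right (hc _ (P.t_mem _))
      (sub_nonneg.2 (hg (P.t_mem _) (P.t_mem _) (P.strictMono i.castSucc_lt_succ).le))
  linarith [(abs_lt.1 (hP P subset_rfl _ P.isSelection_castSucc)).2]

end IsRSIntegral

lemma le_of_forall_pos_le_add_mul {a b c : ℝ} (h : ∀ η > 0, a ≤ b + η * c) : a ≤ b := by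
  refine le_of_forall_pos_le_add fun ε hε => ?_
  have hc : 0 < |c| + 1 := by positivity
  calc a ≤ b + ε / (|c| + 1) * c := h _ (div_pos hε hc)
    _ ≤ b + ε := by
      gcongr
      rw [div_mul_eq_mul_div, div_le_iff₀ hc]
      nlinarith [le_abs_self c]

lemma IsCompact.exists_dist_le_mul_dist_add {α β : Type*} [PseudoMetricSpace α]
    [PseudoMetricSpace β] {s : Set α} {f : α → β} (hs : IsCompact s) (hf : ContinuousOn f s)
    {η : ℝ} (hη : 0 < η) : ∃ K, ∀ x ∈ s, ∀ y ∈ s, dist (f x) (f y) ≤ K * dist x y + η := by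
  obtain ⟨δ, hδ, hfδ⟩ :=
    Metric.uniformContinuousOn_iff.1 (hs.uniformContinuousOn_of_continuous hf) η hη
  refine ⟨Metric.diam (f '' s) / δ, fun x hx y hy => ?_⟩
  rcases lt_or_ge (dist x y) δ with hxy | hxy
  · have : 0 ≤ Metric.diam (f '' s) / δ * dist x y := by positivity
    linarith [hfδ x hx y hy hxy]
  · calc dist (f x) (f y) ≤ Metric.diam (f '' s) :=
          Metric.dist_le_diam_of_mem (hs.image_of_continuousOn hf).isBounded
            (mem_image_of_mem f hx) (mem_image_of_mem f hy)
      _ ≤ Metric.diam (f '' s) / δ * dist x y := by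
          rw [div_mul_eq_mul_div, le_div_iff₀ hδ]
          exact mul_le_mul_of_nonneg_left hxy Metric.diam_nonneg
      _ ≤ _ := le_add_of_nonneg_right hη.le

lemma exists_forall_le_and_forall_le {A B : Set ℝ} (hA : BddAbove A) (hB : BddBelow B)
    (hAB : ∀ α ∈ A, ∀ β ∈ B, α ≤ β) : ∃ c, (∀ α ∈ A, α ≤ c) ∧ ∀ β ∈ B, c ≤ β := by
  obtain ⟨lb, hlb⟩ := hB
  by_cases hA' : A.Nonempty
  · exact ⟨sSup A, fun α hα => le_csSup hA hα, fun β hβ => csSup_le hA' fun α hα => hAB α hα β hβ⟩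
  · exact ⟨lb, fun α hα => (hA' ⟨α, hα⟩).elim, hlb⟩

lemma ConvexOn.slope_le_slope {s : Set ℝ} {F : ℝ → ℝ} (hF : ConvexOn ℝ s F)
    {α β α' β' : ℝ} (hα : α ∈ s) (hβ : β ∈ s) (hα' : α' ∈ s) (hβ' : β' ∈ s)
    (hαβ : α < β) (hαβ' : α' < β') (hαα' : α ≤ α') (hββ' : β ≤ β') :
    slope F α β ≤ slope F α' β' :=
  calc slope F α β ≤ slope F α β' :=
        hF.slope_mono hα ⟨hβ, hαβ.ne'⟩ ⟨hβ', (hαβ.trans_le hββ').ne'⟩ hββ'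
    _ = slope F β' α := slope_comm _ _ _
    _ ≤ slope F β' α' := hF.slope_mono hβ' ⟨hα, (hαβ.trans_le hββ').ne⟩ ⟨hα', hαβ'.ne⟩ hαα'
    _ = slope F α' β' := slope_comm _ _ _

theorem ConvexOn.exists_approx_common_slope {α : Type*} {s : Set ℝ} {F : ℝ → ℝ}
    (hF : ConvexOn ℝ s F) {D : Set α} {u v : α → ℝ} (hu : ∀ t ∈ D, u t ∈ s)
    (hv : ∀ t ∈ D, v t ∈ s)
    (hcross : ∀ t₁ ∈ D, ∀ t₂ ∈ D, v t₁ < u t₁ → u t₂ < v t₂ → u t₁ ≤ u t₂)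
    {K η : ℝ} (hη : 0 ≤ η) (hK : ∀ t ∈ D, |F (v t) - F (u t)| ≤ K * |v t - u t| + η) :
    ∃ k, ∀ t ∈ D, k * (v t - u t) - η ≤ F (v t) - F (u t) := by
  -- `k` satisfies the bound at `t` iff `E t ≤ k` where `v t < u t`, and `k ≤ E t` where
  -- `u t < v t`.
  set E : α → ℝ := fun t => (F (v t) - F (u t) + η) / (v t - u t)
  have hE_mul : ∀ t, v t ≠ u t → E t * (v t - u t) = F (v t) - F (u t) + η :=
    fun t h => div_mul_cancel₀ _ (sub_ne_zero.2 h)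
  have hE_below : ∀ t ∈ D, v t < u t → E t ≤ slope F (v t) (u t) ∧ E t ≤ K := by
    intro t ht h
    have hvu : v t - u t < 0 := sub_neg.2 h
    rw [slope_comm, slope_def_field]
    refine ⟨div_le_div_of_nonpos_of_le hvu.le (by linarith), (div_le_iff_of_neg hvu).2 ?_⟩
    have := hK t ht
    rw [abs_of_neg hvu] at this
    linarith [neg_abs_le (F (v t) - F (u t))]
  have hE_above : ∀ t ∈ D, u t < v t → slope F (u t) (v t) ≤ E t ∧ -K ≤ E t := by
    intro t ht h
    have huv : 0 < v t - u t := sub_pos.2 h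
    rw [slope_def_field]
    refine ⟨div_le_div_of_nonneg_right (by linarith) huv.le, (le_div_iff₀ huv).2 ?_⟩
    have := hK t ht
    rw [abs_of_pos huv] at this
    linarith [neg_abs_le (F (v t) - F (u t))]
  obtain ⟨k, hk_below, hk_above⟩ := exists_forall_le_and_forall_le
    (A := E '' {t ∈ D | v t < u t}) (B := E '' {t ∈ D | u t < v t})
    ⟨K, by rintro _ ⟨t, ⟨ht, h⟩, rfl⟩; exact (hE_below t ht h).2⟩
    ⟨-K, by rintro _ ⟨t, ⟨ht, h⟩, rfl⟩; exact (hE_above t ht h).2⟩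
    (by
      rintro _ ⟨t₁, ⟨ht₁, h₁⟩, rfl⟩ _ ⟨t₂, ⟨ht₂, h₂⟩, rfl⟩
      have hu₁₂ := hcross t₁ ht₁ t₂ ht₂ h₁ h₂
      calc E t₁ ≤ slope F (v t₁) (u t₁) := (hE_below t₁ ht₁ h₁).1
        _ ≤ slope F (u t₂) (v t₂) := hF.slope_le_slope (hv t₁ ht₁) (hu t₁ ht₁) (hu t₂ ht₂)
            (hv t₂ ht₂) h₁ h₂ (by linarith) (by linarith)
        _ ≤ E t₂ := (hE_above t₂ ht₂ h₂).1)
  refine ⟨k, fun t ht => ?_⟩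
  rcases lt_trichotomy (v t) (u t) with h | h | h
  · have hk := hk_below _ ⟨t, ⟨ht, h⟩, rfl⟩
    have := mul_le_mul_of_nonpos_right hk (sub_neg.2 h).le
    linarith [hE_mul t h.ne]
  · simp [h, hη]
  · have hk := hk_above _ ⟨t, ⟨ht, h⟩, rfl⟩
    have := mul_le_mul_of_nonneg_right hk (sub_pos.2 h).le
    linarith [hE_mul t h.ne']

lemma apply_le_apply_of_sign_change {α : Type*} [LinearOrder α] {s : Set α} {x y : α → ℝ}
    (h : (MonotoneOn y s ∧ MonotoneOn (fun t => x t - y t) s) ∨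
      (AntitoneOn y s ∧ AntitoneOn (fun t => x t - y t) s)) :
    ∀ t₁ ∈ s, ∀ t₂ ∈ s, x t₁ < y t₁ → y t₂ < x t₂ → y t₁ ≤ y t₂ := by
  intro t₁ h₁ t₂ h₂ hlt hgt
  have hd : (fun t => x t - y t) t₁ < (fun t => x t - y t) t₂ := by linarith
  rcases h with ⟨hy, hd'⟩ | ⟨hy, hd'⟩
  · exact hy h₁ h₂ (hd'.reflect_lt h₁ h₂ hd).le
  · exact hy h₂ h₁ (hd'.reflect_lt h₁ h₂ hd).le

lemma mem_uIcc_of_monotoneOn_or_antitoneOn {α : Type*} [Preorder α] {s : Set α} {f : α → ℝ}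
    {a b t : α} (hf : MonotoneOn f s ∨ AntitoneOn f s) (ha : a ∈ s) (hb : b ∈ s) (ht : t ∈ s)
    (hat : a ≤ t) (htb : t ≤ b) : f t ∈ uIcc (f a) (f b) := by
  rcases hf with hf | hf
  · exact Icc_subset_uIcc ⟨hf ha ht hat, hf ht hb htb⟩
  · exact Icc_subset_uIcc' ⟨hf ht hb htb, hf ha ht hat⟩

theorem IsRSIntegral.le_of_forall_approx_slope {T : Set ℝ} {a b : ℝ} {p g x y φ ψ : ℝ → ℝ}
    {Ix Iy Iφ Iψ M : ℝ} (hg : MonotoneOn g (Icc a b ∩ T)) (hp : ∀ t ∈ Icc a b ∩ T, 0 ≤ p t)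
    (hM : ∀ t ∈ Icc a b ∩ T, p t ≤ M)
    (hIx : IsRSIntegral T a b (fun t => p t * x t) g Ix)
    (hIy : IsRSIntegral T a b (fun t => p t * y t) g Iy)
    (hIφ : IsRSIntegral T a b (fun t => p t * φ t) g Iφ)
    (hIψ : IsRSIntegral T a b (fun t => p t * ψ t) g Iψ) (heq : Iy = Ix)
    (hslope : ∀ η > 0, ∃ k, ∀ t ∈ Icc a b ∩ T, k * (x t - y t) - η ≤ φ t - ψ t) :
    Iψ ≤ Iφ := by
  refine le_of_forall_pos_le_add_mul (c := M * (g b - g a)) fun η hη => ?_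
  obtain ⟨k, hk⟩ := hslope η hη
  have hlow := ((hIφ.sub hIψ).sub ((hIx.sub hIy).const_mul k)).mul_sub_le_of_le hg
    (c := -(M * η)) fun t ht => by nlinarith [hk t ht, hp t ht, hM t ht]
  rw [heq, sub_self, mul_zero, sub_zero] at hlow
  linarith

theorem rs_majorisation_general (T : Set ℝ) (a b : ℝ)
    (ha : a ∈ T) (hb : b ∈ T) (hab : a < b) (I : Set ℝ) (hI : I.OrdConnected)
    (x y p g : ℝ → ℝ)
    (hx : ∀ t ∈ Set.Icc a b ∩ T, x t ∈ I)
    (hy : ∀ t ∈ Set.Icc a b ∩ T, y t ∈ I)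
    (hg : MonotoneOn g (Set.Icc a b ∩ T))
    (hp : ∀ t ∈ Set.Icc a b ∩ T, 0 ≤ p t)
    (hpb : ∃ M, ∀ t ∈ Set.Icc a b ∩ T, |p t| ≤ M)
    (F : ℝ → ℝ) (hF : ConvexOn ℝ I F) (hFc : ContinuousOn F I)
    (hmono : (MonotoneOn y (Set.Icc a b ∩ T) ∧
        MonotoneOn (fun t => x t - y t) (Set.Icc a b ∩ T)) ∨
      (AntitoneOn y (Set.Icc a b ∩ T) ∧
        AntitoneOn (fun t => x t - y t) (Set.Icc a b ∩ T)))
    (Ipx Ipy IFx IFy : ℝ)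
    (hIpx : IsRSIntegral T a b (fun t => p t * x t) g Ipx)
    (hIpy : IsRSIntegral T a b (fun t => p t * y t) g Ipy)
    (hIFx : IsRSIntegral T a b (fun t => p t * F (x t)) g IFx)
    (hIFy : IsRSIntegral T a b (fun t => p t * F (y t)) g IFy)
    (heq : Ipy = Ipx) :
    IFy ≤ IFx := by
  set D := Icc a b ∩ T
  have haD : a ∈ D := ⟨⟨le_rfl, hab.le⟩, ha⟩
  have hbD : b ∈ D := ⟨⟨hab.le, le_rfl⟩, hb⟩
  have hx_mono : MonotoneOn x D ∨ AntitoneOn x D :=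
    hmono.imp (fun h => by simpa using h.1.add h.2) fun h => by simpa using h.1.add h.2
  set C := uIcc (x a) (x b) ∪ uIcc (y a) (y b)
  have hxC : ∀ t ∈ D, x t ∈ C := fun t ht =>
    Or.inl (mem_uIcc_of_monotoneOn_or_antitoneOn hx_mono haD hbD ht ht.1.1 ht.1.2)
  have hyC : ∀ t ∈ D, y t ∈ C := fun t ht =>
    Or.inr (mem_uIcc_of_monotoneOn_or_antitoneOn (hmono.imp And.left And.left) haD hbD ht
      ht.1.1 ht.1.2)
  have hCI : C ⊆ I :=
    union_subset (hI.uIcc_subset (hx a haD) (hx b hbD)) (hI.uIcc_subset (hy a haD) (hy b hbD))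
  obtain ⟨M, hM⟩ := hpb
  refine IsRSIntegral.le_of_forall_approx_slope hg hp (fun t ht => le_of_abs_le (hM t ht))
    hIpx hIpy hIFx hIFy heq fun η hη => ?_
  obtain ⟨K, hK⟩ :=
    (isCompact_uIcc.union isCompact_uIcc).exists_dist_le_mul_dist_add (hFc.mono hCI) hη
  exact hF.exists_approx_common_slope (fun t ht => hCI (hyC t ht)) (fun t ht => hCI (hxC t ht))
    (apply_le_apply_of_sign_change hmono) hη.le fun t ht => hK _ (hxC t ht) _ (hyC t ht)

/-- majorisation theorem for RS Δ-integrals. -/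
theorem rs_majorisation (T : Set ℝ) (hT : IsClosed T) (a b : ℝ)
    (ha : a ∈ T) (hb : b ∈ T) (hab : a < b) (I : Set ℝ) (hI : I.OrdConnected)
    (x y p g : ℝ → ℝ)
    (hx : ∀ t ∈ Set.Icc a b ∩ T, x t ∈ I)
    (hy : ∀ t ∈ Set.Icc a b ∩ T, y t ∈ I)
    (hxc : RdContinuousOn T a b x) (hyc : RdContinuousOn T a b y)
    (hpc : RdContinuousOn T a b p) (hgc : RdContinuousOn T a b g)
    (hg : MonotoneOn g (Set.Icc a b ∩ T))
    (hp : ∀ t ∈ Set.Icc a b ∩ T, 0 ≤ p t)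
    (hpb : ∃ M, ∀ t ∈ Set.Icc a b ∩ T, |p t| ≤ M)
    (F : ℝ → ℝ) (hF : ConvexOn ℝ I F) (hFc : ContinuousOn F I)
    (hmono : (MonotoneOn y (Set.Icc a b ∩ T) ∧
        MonotoneOn (fun t => x t - y t) (Set.Icc a b ∩ T)) ∨
      (AntitoneOn y (Set.Icc a b ∩ T) ∧
        AntitoneOn (fun t => x t - y t) (Set.Icc a b ∩ T)))
    (Ipx Ipy IFx IFy : ℝ)
    (hIpx : IsRSIntegral T a b (fun t => p t * x t) g Ipx)
    (hIpy : IsRSIntegral T a b (fun t => p t * y t) g Ipy)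
    (hIFx : IsRSIntegral T a b (fun t => p t * F (x t)) g IFx)
    (hIFy : IsRSIntegral T a b (fun t => p t * F (y t)) g IFy)
    (heq : Ipy = Ipx) :
    IFy ≤ IFx :=
  rs_majorisation_general T a b ha hb hab I hI x y p g hx hy hg hp hpb F hF hFc hmono Ipx Ipy IFx
    IFy hIpx hIpy hIFx hIFy heq
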